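/- Denoiser asymptotics: under an affine Gaussian path with data density p₁ Lipschitz and bounded below by a positive constant near x/α_t, the denoiser satisfies x̂₁(x,t) = x/α_t + O(σ_t) as t → 1 (where σ_t → 0, α_t → 1). -/

import Mathlib

/-!
In the coordinates `v = (x₁ - x/α_t)/σ_t` the posterior weight `N(x | α_t x₁, σ_t² I) p₁(x₁)` is,
up to a factor independent of `v`, equal to `exp(-α_t²‖v‖²/2) p₁(x/α_t + σ_t v)`, so
`x̂₁ - x/α_t` is `σ_t` times the mean of `v` under this weight. As long as `α_t ∈ [1/2, 2]` and
`σ_t ≤ 1`, the Lipschitz bound on `p₁` dominates the weight by the fixed function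
`exp(-‖v‖²/8) (p₁(x) + Kε + K‖v‖)`, whose first moment is finite, while the lower bound `m` on `p₁`
near `x` keeps its mass above `e⁻² m vol(B(0,1))`. Mean = first moment / mass is therefore
bounded uniformly in `t`.
-/

open Real MeasureTheory Filter

/-- Gaussian density on `ℝ^d` with mean `μ` and covariance `s² I`. -/
noncomputable def gaussDensity (d : ℕ) (μ : EuclideanSpace ℝ (Fin d)) (s : ℝ)
    (y : EuclideanSpace ℝ (Fin d)) : ℝ :=
  (2 * π * s ^ 2) ^ (-(d : ℝ) / 2) * Real.exp (-‖y - μ‖ ^ 2 / (2 * s ^ 2))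

/-- The AGPP marginal density `p_t(x)`. -/
noncomputable def marginal (d : ℕ) (αt σt : ℝ) (p₁ : EuclideanSpace ℝ (Fin d) → ℝ)
    (x : EuclideanSpace ℝ (Fin d)) : ℝ :=
  ∫ x₁, gaussDensity d (αt • x₁) σt x * p₁ x₁

/-- The denoiser `x̂₁(x,t) = ∫ x₁ p_t(x₁|x) dx₁` with posterior
`p_t(x₁|x) = N(x|α_t x₁, σ_t² I) p₁(x₁)/p_t(x)`. -/
noncomputable def denoiser (d : ℕ) (αt σt : ℝ) (p₁ : EuclideanSpace ℝ (Fin d) → ℝ)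
    (x : EuclideanSpace ℝ (Fin d)) : EuclideanSpace ℝ (Fin d) :=
  (marginal d αt σt p₁ x)⁻¹ • ∫ x₁, (gaussDensity d (αt • x₁) σt x * p₁ x₁) • x₁

open Metric Set Module

theorem dist_add_smul_le {E : Type*} [SeminormedAddCommGroup E] [NormedSpace ℝ E]
    (b x v : E) {σ : ℝ} (hσ : 0 ≤ σ) : dist (b + σ • v) x ≤ dist b x + σ * ‖v‖ := by
  have := dist_triangle (b + σ • v) b x
  rw [dist_self_add_left, norm_smul, Real.norm_of_nonneg hσ] at this
  linarith

theorem LipschitzWith.le_add_mul_add_mul_norm {E : Type*} [SeminormedAddCommGroup E]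
    [NormedSpace ℝ E] {K : NNReal} {f : E → ℝ} (hf : LipschitzWith K f) {b x : E} {σ ε : ℝ}
    (hσ : 0 ≤ σ) (hσ1 : σ ≤ 1) (hbx : dist b x ≤ ε) (v : E) :
    f (b + σ • v) ≤ f x + K * ε + K * ‖v‖ := by
  have hσv : σ * ‖v‖ ≤ ‖v‖ := mul_le_of_le_one_left (norm_nonneg v) hσ1
  calc f (b + σ • v) ≤ f x + K * dist (b + σ • v) x := hf.le_add_mul _ _
    _ ≤ f x + K * (ε + ‖v‖) := by gcongr; linarith [dist_add_smul_le b x v hσ]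
    _ = f x + K * ε + K * ‖v‖ := by ring

theorem add_smul_mem_ball {E : Type*} [SeminormedAddCommGroup E] [NormedSpace ℝ E]
    {b x v : E} {σ ε : ℝ} (hσ : 0 ≤ σ) (hσε : σ ≤ ε / 2) (hbx : dist b x < ε / 2)
    (hv : v ∈ ball (0 : E) 1) : b + σ • v ∈ ball x ε := by
  rw [mem_ball_zero_iff] at hv
  refine mem_ball.2 ((dist_add_smul_le b x v hσ).trans_lt ?_)
  nlinarith [norm_nonneg v]

section GaussianWeights

variable {E : Type*} [NormedAddCommGroup E] [NormedSpace ℝ E] [FiniteDimensional ℝ E]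
  [MeasurableSpace E] [BorelSpace E] {μ : Measure E} [μ.IsAddHaarMeasure]

variable (μ) in
theorem integrable_pow_norm_mul_exp_neg_mul_sq_norm {b : ℝ} (hb : 0 < b) (k : ℕ) :
    Integrable (fun v : E => ‖v‖ ^ k * exp (-b * ‖v‖ ^ 2)) μ := by
  cases subsingleton_or_nontrivial E
  · exact (by fun_prop : Continuous _).integrable_of_hasCompactSupport
      (HasCompactSupport.of_compactSpace _)
  · rw [integrable_fun_norm_addHaar μ (f := fun r => r ^ k * exp (-b * r ^ 2))]
    refine (integrableOn_rpow_mul_exp_neg_mul_sq hb (s := ((finrank ℝ E - 1 + k : ℕ) : ℝ))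
      (neg_one_lt_zero.trans_le (Nat.cast_nonneg _))).congr_fun (fun r _ => ?_) measurableSet_Ioi
    simp only [smul_eq_mul, rpow_natCast, pow_add, mul_assoc]

theorem integrable_add_mul_norm_mul_exp_neg_mul_sq_norm_mul_pow {β : ℝ} (hβ : 0 < β)
    (A K : ℝ) (k : ℕ) :
    Integrable (fun v : E => (A + K * ‖v‖) * exp (-β * ‖v‖ ^ 2) * ‖v‖ ^ k) μ :=
  (((integrable_pow_norm_mul_exp_neg_mul_sq_norm μ hβ k).const_mul A).add
    ((integrable_pow_norm_mul_exp_neg_mul_sq_norm μ hβ (k + 1)).const_mul K)).congr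
    (.of_forall fun v => by simp only [Pi.add_apply]; ring)

theorem exp_neg_mul_sq_mul_le {a β r s t : ℝ} (hβa : β ≤ a) (hs : 0 ≤ s) (hst : s ≤ t) :
    exp (-a * r ^ 2) * s ≤ t * exp (-β * r ^ 2) := by
  rw [mul_comm t]
  gcongr

variable {q : E → ℝ} {a β A K : ℝ}

theorem integrable_exp_neg_mul_sq_norm_mul_mul_pow (hβ : 0 < β) (hβa : β ≤ a)
    (hq : Continuous q) (hq0 : ∀ v, 0 ≤ q v) (hqA : ∀ v, q v ≤ A + K * ‖v‖) (k : ℕ) :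
    Integrable (fun v => exp (-a * ‖v‖ ^ 2) * q v * ‖v‖ ^ k) μ := by
  refine (integrable_add_mul_norm_mul_exp_neg_mul_sq_norm_mul_pow hβ A K k).mono' (by fun_prop)
    (.of_forall fun v => ?_)
  rw [Real.norm_of_nonneg (by have := hq0 v; positivity)]
  exact mul_le_mul_of_nonneg_right (exp_neg_mul_sq_mul_le hβa (hq0 v) (hqA v)) (by positivity)

theorem integral_exp_neg_mul_sq_norm_mul_mul_norm_le (hβ : 0 < β) (hβa : β ≤ a)
    (hq0 : ∀ v, 0 ≤ q v) (hqA : ∀ v, q v ≤ A + K * ‖v‖) :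
    ∫ v, exp (-a * ‖v‖ ^ 2) * q v * ‖v‖ ∂μ ≤
      ∫ v, (A + K * ‖v‖) * exp (-β * ‖v‖ ^ 2) * ‖v‖ ∂μ :=
  integral_mono_of_nonneg (.of_forall fun v => by have := hq0 v; positivity)
    (by simpa only [pow_one] using integrable_add_mul_norm_mul_exp_neg_mul_sq_norm_mul_pow hβ A K 1)
    (.of_forall fun v =>
      mul_le_mul_of_nonneg_right (exp_neg_mul_sq_mul_le hβa (hq0 v) (hqA v)) (norm_nonneg v))

theorem le_integral_exp_neg_mul_sq_norm_mul {m : ℝ} (ha : 0 ≤ a) (hq0 : ∀ v, 0 ≤ q v)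
    (hqm : ∀ v ∈ ball (0 : E) 1, m ≤ q v)
    (hint : Integrable (fun v => exp (-a * ‖v‖ ^ 2) * q v) μ) :
    exp (-a) * m * μ.real (ball 0 1) ≤ ∫ v, exp (-a * ‖v‖ ^ 2) * q v ∂μ := by
  refine (setIntegral_ge_of_const_le_real measurableSet_ball measure_ball_lt_top.ne
    (fun v hv => ?_) hint.integrableOn).trans
    (setIntegral_le_integral hint (.of_forall fun v => by have := hq0 v; positivity))
  have hv1 : ‖v‖ ^ 2 ≤ 1 := by
    rw [mem_ball_zero_iff] at hv
    nlinarith [norm_nonneg v]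
  calc exp (-a) * m ≤ exp (-a) * q v := by gcongr; exact hqm v hv
    _ ≤ exp (-a * ‖v‖ ^ 2) * q v := by
      gcongr
      · exact hq0 v
      · nlinarith

end GaussianWeights

section WeightedMean

theorem norm_inv_integral_smul_integral_sub_le {E : Type*} [NormedAddCommGroup E]
    [NormedSpace ℝ E] [CompleteSpace E] [SecondCountableTopology E] [MeasurableSpace E]
    [BorelSpace E] {μ : Measure E} {w : E → ℝ} (hw : ∀ y, 0 ≤ w y) (b : E)
    (hwi : Integrable w μ) (hwb : Integrable (fun y => w y * ‖y - b‖) μ)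
    (hpos : 0 < ∫ y, w y ∂μ) :
    ‖(∫ y, w y ∂μ)⁻¹ • ∫ y, w y • y ∂μ - b‖ ≤ (∫ y, w y * ‖y - b‖ ∂μ) / ∫ y, w y ∂μ := by
  have hdev : Integrable (fun y => w y • (y - b)) μ :=
    hwb.congr' (hwi.aestronglyMeasurable.smul
      (by fun_prop : Continuous fun y : E => y - b).aestronglyMeasurable)
      (.of_forall fun y => by simp [norm_smul, abs_of_nonneg (hw y)])
  have hsplit : ∫ y, w y • y ∂μ = ∫ y, w y • (y - b) ∂μ + (∫ y, w y ∂μ) • b := by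
    rw [← integral_smul_const, ← integral_add hdev (hwi.smul_const b)]
    simp only [← smul_add, sub_add_cancel]
  rw [hsplit, smul_add, smul_smul, inv_mul_cancel₀ hpos.ne', one_smul, add_sub_cancel_right,
    norm_smul, Real.norm_of_nonneg (inv_nonneg.2 hpos.le), inv_mul_eq_div]
  gcongr
  refine (norm_integral_le_integral_norm _).trans_eq (integral_congr_ae (.of_forall fun y => ?_))
  simp [norm_smul, abs_of_nonneg (hw y)]

variable {E : Type*} [NormedAddCommGroup E] [NormedSpace ℝ E] [FiniteDimensional ℝ E]
  [MeasurableSpace E] [BorelSpace E] {μ : Measure E} [μ.IsAddHaarMeasure]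

theorem integral_comp_add_smul {F : Type*} [NormedAddCommGroup F] [NormedSpace ℝ F]
    (f : E → F) (b : E) {σ : ℝ} (hσ : 0 ≤ σ) :
    ∫ v, f (b + σ • v) ∂μ = (σ ^ finrank ℝ E)⁻¹ • ∫ y, f y ∂μ := by
  rw [Measure.integral_comp_smul_of_nonneg μ (fun z => f (b + z)) σ (hR := hσ),
    integral_add_left_eq_self]

theorem Integrable.of_comp_add_smul {F : Type*} [NormedAddCommGroup F] {f : E → F} {b : E}
    {σ : ℝ} (hσ : σ ≠ 0) (hf : Integrable (fun v => f (b + σ • v)) μ) : Integrable f μ := by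
  simpa using ((integrable_comp_smul_iff μ (fun z => f (b + z)) hσ).1 hf).comp_add_left (-b)

theorem norm_inv_integral_smul_integral_sub_le_mul {w : E → ℝ} (hw : ∀ y, 0 ≤ w y) (b : E)
    {σ : ℝ} (hσ : 0 < σ) (hwi : Integrable (fun v => w (b + σ • v)) μ)
    (hwb : Integrable (fun v => w (b + σ • v) * ‖v‖) μ) (hpos : 0 < ∫ v, w (b + σ • v) ∂μ) :
    ‖(∫ y, w y ∂μ)⁻¹ • ∫ y, w y • y ∂μ - b‖ ≤
      σ * ((∫ v, w (b + σ • v) * ‖v‖ ∂μ) / ∫ v, w (b + σ • v) ∂μ) := by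
  have hshift : ∀ v : E, w (b + σ • v) * ‖b + σ • v - b‖ = σ * (w (b + σ • v) * ‖v‖) := fun v => by
    rw [add_sub_cancel_left, norm_smul, Real.norm_of_nonneg hσ.le]; ring
  have hσn : σ ^ finrank ℝ E ≠ 0 := pow_ne_zero _ hσ.ne'
  have hden : ∫ y, w y ∂μ = σ ^ finrank ℝ E * ∫ v, w (b + σ • v) ∂μ := by
    rw [integral_comp_add_smul w b hσ.le, smul_eq_mul, mul_inv_cancel_left₀ hσn]
  have hnum : ∫ y, w y * ‖y - b‖ ∂μ = σ ^ finrank ℝ E * (σ * ∫ v, w (b + σ • v) * ‖v‖ ∂μ) := by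
    rw [← integral_const_mul, ← funext hshift, integral_comp_add_smul (fun y => w y * ‖y - b‖) b hσ.le,
      smul_eq_mul, mul_inv_cancel_left₀ hσn]
  refine (norm_inv_integral_smul_integral_sub_le hw b (Integrable.of_comp_add_smul hσ.ne' hwi)
    (Integrable.of_comp_add_smul (b := b) hσ.ne' (f := fun y => w y * ‖y - b‖)
      (by simpa only [hshift] using hwb.const_mul σ)) ?_).trans_eq ?_
  · rw [hden]; positivity
  · rw [hden, hnum, mul_div_mul_left _ _ hσn, mul_div_assoc]

end WeightedMean

theorem gaussDensity_smul_inv_smul_add_smul {d : ℕ} {α σ : ℝ} (hα : α ≠ 0) (hσ : σ ≠ 0)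
    (x v : EuclideanSpace ℝ (Fin d)) :
    gaussDensity d (α • (α⁻¹ • x + σ • v)) σ x =
      (2 * π * σ ^ 2) ^ (-(d : ℝ) / 2) * exp (-(α ^ 2 / 2) * ‖v‖ ^ 2) := by
  have hdiff : x - α • (α⁻¹ • x + σ • v) = -(α * σ) • v := by
    rw [smul_add, smul_inv_smul₀ hα, smul_smul, neg_smul]; abel
  rw [gaussDensity, hdiff, norm_smul, Real.norm_eq_abs, abs_neg, mul_pow, sq_abs]
  congr 2
  field_simp

theorem norm_denoiser_sub_inv_smul_le_mul_div {d : ℕ} {α σ : ℝ}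
    {p₁ : EuclideanSpace ℝ (Fin d) → ℝ} {x : EuclideanSpace ℝ (Fin d)} (hα : α ≠ 0) (hσ : 0 < σ)
    (hp₁0 : ∀ y, 0 ≤ p₁ y)
    (hint : Integrable fun v => exp (-(α ^ 2 / 2) * ‖v‖ ^ 2) * p₁ (α⁻¹ • x + σ • v))
    (hint' : Integrable fun v => exp (-(α ^ 2 / 2) * ‖v‖ ^ 2) * p₁ (α⁻¹ • x + σ • v) * ‖v‖)
    (hpos : 0 < ∫ v, exp (-(α ^ 2 / 2) * ‖v‖ ^ 2) * p₁ (α⁻¹ • x + σ • v)) :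
    ‖denoiser d α σ p₁ x - α⁻¹ • x‖ ≤
      σ * ((∫ v, exp (-(α ^ 2 / 2) * ‖v‖ ^ 2) * p₁ (α⁻¹ • x + σ • v) * ‖v‖) /
        ∫ v, exp (-(α ^ 2 / 2) * ‖v‖ ^ 2) * p₁ (α⁻¹ • x + σ • v)) := by
  set c := (2 * π * σ ^ 2) ^ (-(d : ℝ) / 2)
  have hc : 0 < c := by positivity
  have hw : ∀ v, gaussDensity d (α • (α⁻¹ • x + σ • v)) σ x * p₁ (α⁻¹ • x + σ • v) =
      c * (exp (-(α ^ 2 / 2) * ‖v‖ ^ 2) * p₁ (α⁻¹ • x + σ • v)) := fun v => by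
    rw [gaussDensity_smul_inv_smul_add_smul hα hσ.ne', mul_assoc]
  refine (norm_inv_integral_smul_integral_sub_le_mul
    (w := fun y => gaussDensity d (α • y) σ x * p₁ y)
    (fun y => mul_nonneg (by unfold gaussDensity; positivity) (hp₁0 y)) (α⁻¹ • x) hσ
    (by simpa only [hw] using hint.const_mul c)
    (by simpa only [hw, mul_assoc] using hint'.const_mul c)
    (by simp only [hw, integral_const_mul]; positivity)).trans_eq ?_
  simp_rw [hw, mul_assoc c, integral_const_mul]
  rw [mul_div_mul_left _ _ hc.ne']

theorem norm_denoiser_sub_inv_smul_le {d : ℕ} {α σ m A K : ℝ}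
    {p₁ : EuclideanSpace ℝ (Fin d) → ℝ} {x : EuclideanSpace ℝ (Fin d)}
    (hα : α ∈ Icc (1 / 2 : ℝ) 2) (hσ : 0 < σ) (hp₁ : Continuous p₁) (hp₁0 : ∀ y, 0 ≤ p₁ y)
    (hpA : ∀ v, p₁ (α⁻¹ • x + σ • v) ≤ A + K * ‖v‖) (hm : 0 < m)
    (hpm : ∀ v ∈ ball 0 1, m ≤ p₁ (α⁻¹ • x + σ • v)) :
    ‖denoiser d α σ p₁ x - α⁻¹ • x‖ ≤
      (∫ v : EuclideanSpace ℝ (Fin d), (A + K * ‖v‖) * exp (-(1 / 8) * ‖v‖ ^ 2) * ‖v‖) /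
        (exp (-2) * m * volume.real (ball (0 : EuclideanSpace ℝ (Fin d)) 1)) * σ := by
  obtain ⟨hα1, hα2⟩ := hα
  have hβa : 1 / 8 ≤ α ^ 2 / 2 := by nlinarith
  have hq0 : ∀ v, 0 ≤ p₁ (α⁻¹ • x + σ • v) := fun v => hp₁0 _
  have hint := integrable_exp_neg_mul_sq_norm_mul_mul_pow (μ := volume) (by norm_num) hβa
    (hp₁.comp (by fun_prop)) hq0 hpA
  have hlow := le_integral_exp_neg_mul_sq_norm_mul (μ := volume) (a := α ^ 2 / 2)
    (by positivity) hq0 hpm (by simpa using hint 0)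
  have hvol : 0 < volume.real (ball (0 : EuclideanSpace ℝ (Fin d)) 1) :=
    ENNReal.toReal_pos (measure_ball_pos _ _ one_pos).ne' measure_ball_lt_top.ne
  have hL : exp (-2) * m * volume.real (ball (0 : EuclideanSpace ℝ (Fin d)) 1) ≤
      ∫ v, exp (-(α ^ 2 / 2) * ‖v‖ ^ 2) * p₁ (α⁻¹ • x + σ • v) :=
    hlow.trans' (by gcongr; nlinarith)
  have hup := integral_exp_neg_mul_sq_norm_mul_mul_norm_le (μ := volume) (by norm_num) hβa hq0 hpA
  calc ‖denoiser d α σ p₁ x - α⁻¹ • x‖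
      ≤ σ * ((∫ v, exp (-(α ^ 2 / 2) * ‖v‖ ^ 2) * p₁ (α⁻¹ • x + σ • v) * ‖v‖) /
          ∫ v, exp (-(α ^ 2 / 2) * ‖v‖ ^ 2) * p₁ (α⁻¹ • x + σ • v)) :=
        norm_denoiser_sub_inv_smul_le_mul_div (by linarith) hσ hp₁0 (by simpa using hint 0)
          (by simpa using hint 1) (hL.trans_lt' (by positivity))
    _ ≤ _ := by
        rw [mul_comm σ]
        gcongr
        exact (integral_nonneg fun v => by have := hq0 v; positivity).trans hup

theorem denoiser_asymptotics_general (d : ℕ) (α σ : ℝ → ℝ)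
    (hσ0 : Tendsto σ (nhdsWithin 1 (Set.Iio 1)) (nhds 0))
    (hα1 : Tendsto α (nhdsWithin 1 (Set.Iio 1)) (nhds 1))
    (hσpos : ∀ᶠ t in nhdsWithin 1 (Set.Iio 1), 0 < σ t)
    (K : NNReal) (p₁ : EuclideanSpace ℝ (Fin d) → ℝ)
    (hp₁_nonneg : ∀ x₁, 0 ≤ p₁ x₁) (hp₁_lip : LipschitzWith K p₁)
    (x : EuclideanSpace ℝ (Fin d))
    (hlb : ∃ ε > (0 : ℝ), ∃ m > (0 : ℝ), ∀ y ∈ Metric.ball x ε, m ≤ p₁ y) :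
    ∃ C > (0 : ℝ), ∀ᶠ t in nhdsWithin 1 (Set.Iio 1),
      ‖denoiser d (α t) (σ t) p₁ x - (α t)⁻¹ • x‖ ≤ C * σ t := by
  obtain ⟨ε, hε, m, hm, hball⟩ := hlb
  refine ⟨max ((∫ v : EuclideanSpace ℝ (Fin d), (p₁ x + K * ε + K * ‖v‖) *
      exp (-(1 / 8) * ‖v‖ ^ 2) * ‖v‖) /
        (exp (-2) * m * volume.real (ball (0 : EuclideanSpace ℝ (Fin d)) 1))) 1,
    lt_max_of_lt_right one_pos, ?_⟩
  have hαx : Tendsto (fun t => (α t)⁻¹ • x) (nhdsWithin 1 (Iio 1)) (nhds x) := by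
    simpa using (hα1.inv₀ one_ne_zero).smul_const x
  filter_upwards [hα1.eventually (Icc_mem_nhds (by norm_num : (1 / 2 : ℝ) < 1) one_lt_two),
    hσpos, hσ0.eventually_lt_const one_pos, hσ0.eventually_lt_const (half_pos hε),
    hαx.eventually (ball_mem_nhds x (half_pos hε))] with t hαt hσt hσt1 hσtε hxt
  exact (norm_denoiser_sub_inv_smul_le hαt hσt hp₁_lip.continuous hp₁_nonneg
    (hp₁_lip.le_add_mul_add_mul_norm hσt.le hσt1.le (hxt.le.trans (half_le_self hε.le))) hm
    fun v hv => hball _ (add_smul_mem_ball hσt.le hσtε.le hxt hv)).trans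
    (mul_le_mul_of_nonneg_right (le_max_left _ _) hσt.le)

/-- Denoiser asymptotics: for a Lipschitz data density `p₁` bounded below by a positive
constant near `x`, with `σ_t → 0` and `α_t → 1` as `t → 1⁻`, the denoiser satisfies
`x̂₁(x,t) = x/α_t + O(σ_t)`. -/
theorem denoiser_asymptotics (d : ℕ) (α σ : ℝ → ℝ)
    (hσ0 : Tendsto σ (nhdsWithin 1 (Set.Iio 1)) (nhds 0))
    (hα1 : Tendsto α (nhdsWithin 1 (Set.Iio 1)) (nhds 1))
    (hσpos : ∀ᶠ t in nhdsWithin 1 (Set.Iio 1), 0 < σ t)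
    (hαpos : ∀ᶠ t in nhdsWithin 1 (Set.Iio 1), 0 < α t)
    (K : NNReal) (p₁ : EuclideanSpace ℝ (Fin d) → ℝ)
    (hp₁_nonneg : ∀ x₁, 0 ≤ p₁ x₁) (hp₁_lip : LipschitzWith K p₁)
    (x : EuclideanSpace ℝ (Fin d))
    (hlb : ∃ ε > (0 : ℝ), ∃ m > (0 : ℝ), ∀ y ∈ Metric.ball x ε, m ≤ p₁ y) :
    ∃ C > (0 : ℝ), ∀ᶠ t in nhdsWithin 1 (Set.Iio 1),
      ‖denoiser d (α t) (σ t) p₁ x - (α t)⁻¹ • x‖ ≤ C * σ t :=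
  denoiser_asymptotics_general d α σ hσ0 hα1 hσpos K p₁ hp₁_nonneg hp₁_lip x hlb
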